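/- In the graph G_{M,t,3}, every 3-club containing at least two of the vertices c_i contains no vertex h_{i,j}, contains at most 3 of the c-vertices, at most 4 vertices of X ∪ Y ∪ Z, and at most one a-vertex; hence it has at most 7 vertices. -/

import Mathlib

/-- `S` is an `s`-club of `G`: the subgraph induced by `S` has diameter at most `s`. -/
def IsGraphSClub {V : Type*} (G : SimpleGraph V) (s : ℕ) (S : Set V) : Prop :=
  ∀ u v : S, ∃ p : (G.induce S).Walk u v, p.length ≤ s

/-- Vertices of the graph `G_{M,t,3}`. -/
inductive MVtx3 (X Y Z : Type) (m t : ℕ) where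
  | vx (a : X)
  | vy (b : Y)
  | vz (c : Z)
  | va (i : Fin m)
  | vc (i : Fin m)
  | vh (i : Fin m) (j : Fin (t - 5))

/-- Base adjacency relation of `G_{M,t,3}`. -/
def MRel3 {X Y Z : Type} {m t : ℕ} (tr : Fin m → X × Y × Z) :
    MVtx3 X Y Z m t → MVtx3 X Y Z m t → Prop
  | MVtx3.vc i, MVtx3.va i' => i = i'
  | MVtx3.va i, MVtx3.vh i' _ => i = i'
  | MVtx3.vc i, MVtx3.vx a => (tr i).1 = a
  | MVtx3.vc i, MVtx3.vy b => (tr i).2.1 = b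
  | MVtx3.vc i, MVtx3.vz c => (tr i).2.2 = c
  | _, _ => False

/-- The graph `G_{M,t,3}`. -/
def MGraph3 {X Y Z : Type} {m t : ℕ} (tr : Fin m → X × Y × Z) :
    SimpleGraph (MVtx3 X Y Z m t) :=
  SimpleGraph.fromRel (MRel3 tr)

/-!
Colour `c_i` and `h_{i,j}` white and all other vertices black; this is a proper 2-colouring, so
two distinct vertices of the same colour in a 3-club are at distance exactly 2 inside it and have
a common neighbour there. Distinct `a`-vertices, distinct `x`-vertices (and likewise for `y`, `z`)
have no common neighbour, and `h_{i,j}` has none with `c_{i'}` for `i' ≠ i`. Two `c`-vertices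
of the club share an element vertex `e`, whose only neighbours are, by 2-boundedness, these two
`c`-vertices; so if two further `c`-vertices shared `e'`, then `e` and `e'` could have no common
neighbour.
-/

open SimpleGraph

theorem IsGraphSClub.exists_adj_adj_of_color_eq {V : Type*} {G : SimpleGraph V} {S : Set V}
    (hS : IsGraphSClub G 3 S) (C : G.Coloring Bool) {u v : V} (hu : u ∈ S) (hv : v ∈ S)
    (huv : u ≠ v) (hC : C u = C v) : ∃ w ∈ S, G.Adj u w ∧ G.Adj w v := by
  obtain ⟨p, hp⟩ := hS ⟨u, hu⟩ ⟨v, hv⟩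
  have hev : Even p.length :=
    ((C.comap (Embedding.induce S).toHom).even_length_iff_congr p).2 (by simp [hC])
  cases p with
  | nil => exact absurd rfl huv
  | cons h₁ q =>
    cases q with
    | nil => simp at hev
    | cons h₂ r =>
      cases r with
      | nil => exact ⟨_, Subtype.prop _, h₁, h₂⟩
      | cons h₃ s =>
        simp only [Walk.length_cons] at hp hev
        obtain h : s.length = 0 := by omega
        simp [h, Nat.even_add_one] at hev

theorem IsGraphSClub.inter_subsingleton {V : Type*} {G : SimpleGraph V} {S T : Set V}
    (hS : IsGraphSClub G 3 S) (C : G.Coloring Bool) (hT : ∀ u ∈ T, ∀ v ∈ T, C u = C v)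
    (hadj : ∀ u ∈ T, ∀ v ∈ T, ∀ w, G.Adj u w → G.Adj w v → u = v) : (S ∩ T).Subsingleton := by
  rintro u ⟨huS, huT⟩ v ⟨hvS, hvT⟩
  by_contra huv
  obtain ⟨w, -, huw, hwv⟩ := hS.exists_adj_adj_of_color_eq C huS hvS huv (hT u huT v hvT)
  exact huv (hadj u huT v hvT w huw hwv)

theorem Set.eq_or_eq_of_ncard_le_two {α : Type*} {s : Set α} {a b c : α} (hs : s.ncard ≤ 2)
    (ha : a ∈ s) (hb : b ∈ s) (hc : c ∈ s) (hab : a ≠ b) (hfin : s.Finite := by toFinite_tac) :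
    c = a ∨ c = b := by
  by_contra! h
  exact hs.not_gt ((Set.two_lt_ncard_iff hfin).2 ⟨a, b, c, ha, hb, hc, hab, h.1.symm, h.2.symm⟩)

theorem Set.Subsingleton.ncard_le_one {α : Type*} {s : Set α} (h : s.Subsingleton) :
    s.ncard ≤ 1 :=
  (Set.ncard_le_one h.finite).2 fun _ ha _ hb => h ha hb

def IsTwoBounded {X Y Z : Type} {m : ℕ} (tr : Fin m → X × Y × Z) : Prop :=
  (∀ a : X, ({i : Fin m | (tr i).1 = a}).ncard ≤ 2) ∧
    (∀ b : Y, ({i : Fin m | (tr i).2.1 = b}).ncard ≤ 2) ∧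
    (∀ c : Z, ({i : Fin m | (tr i).2.2 = c}).ncard ≤ 2)

open MVtx3

namespace MGraph3

variable {X Y Z : Type} {m t : ℕ} {tr : Fin m → X × Y × Z}

@[simp]
theorem adj_iff {u v : MVtx3 X Y Z m t} :
    (MGraph3 tr).Adj u v ↔ u ≠ v ∧ (MRel3 tr u v ∨ MRel3 tr v u) :=
  SimpleGraph.fromRel_adj _ _ _

attribute [local simp] MRel3

def bicoloring (tr : Fin m → X × Y × Z) : (MGraph3 (t := t) tr).Coloring Bool :=
  SimpleGraph.Coloring.mk (fun | vc _ | vh _ _ => true | _ => false) fun {u v} h => by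
    cases u <;> cases v <;> simp_all

theorem bicoloring_eq_of_adj_vc {i i' : Fin m} {e e' : MVtx3 X Y Z m t}
    (he : (MGraph3 tr).Adj (vc i) e) (he' : (MGraph3 tr).Adj (vc i') e') :
    bicoloring tr e = bicoloring tr e' := by
  cases e <;> cases e' <;> simp_all <;> rfl

theorem ncard_setOf_adj_vc_le_two
    (htr : IsTwoBounded tr) (e : MVtx3 X Y Z m t) :
    {k | (MGraph3 tr).Adj (vc k) e}.ncard ≤ 2 := by
  cases e with
  | vx a => simpa using htr.1 a
  | vy b => simpa using htr.2.1 b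
  | vz c => simpa using htr.2.2 c
  | va i => simp [eq_comm]
  | vc i => simp
  | vh i j => simp

theorem exists_eq_vc_of_adj {i₁ i₂ : Fin m} {e w : MVtx3 X Y Z m t} (hne : i₁ ≠ i₂)
    (h₁ : (MGraph3 tr).Adj (vc i₁) e) (h₂ : (MGraph3 tr).Adj (vc i₂) e)
    (hw : (MGraph3 tr).Adj w e) : ∃ k, w = vc k := by
  cases e <;> cases w <;> simp_all

theorem eq_or_eq_of_adj_vc
    (htr : IsTwoBounded tr)
    {i₁ i₂ : Fin m} {e w : MVtx3 X Y Z m t} (hne : i₁ ≠ i₂)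
    (h₁ : (MGraph3 tr).Adj (vc i₁) e) (h₂ : (MGraph3 tr).Adj (vc i₂) e)
    (hw : (MGraph3 tr).Adj w e) : w = vc i₁ ∨ w = vc i₂ := by
  obtain ⟨k, rfl⟩ := exists_eq_vc_of_adj hne h₁ h₂ hw
  simpa using Set.eq_or_eq_of_ncard_le_two (ncard_setOf_adj_vc_le_two htr e)
    h₁ h₂ hw hne

variable {S : Set (MVtx3 X Y Z m t)}

theorem vh_notMem_of_vc_mem (hS : IsGraphSClub (MGraph3 tr) 3 S) {i i' : Fin m}
    (hi : i' ≠ i) (hc : vc i' ∈ S) (j : Fin (t - 5)) : vh i j ∉ S := fun hh => by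
  obtain ⟨w, -, h₁, h₂⟩ :=
    hS.exists_adj_adj_of_color_eq (bicoloring tr) hh hc (by simp) rfl
  cases w <;> simp_all

theorem inter_vx_subsingleton (hS : IsGraphSClub (MGraph3 tr) 3 S) :
    (S ∩ {w | ∃ a, w = vx a}).Subsingleton :=
  hS.inter_subsingleton (bicoloring tr) (by rintro _ ⟨_, rfl⟩ _ ⟨_, rfl⟩; rfl)
    (by rintro _ ⟨_, rfl⟩ _ ⟨_, rfl⟩ w h₁ h₂; cases w <;> simp_all)

theorem inter_vy_subsingleton (hS : IsGraphSClub (MGraph3 tr) 3 S) :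
    (S ∩ {w | ∃ b, w = vy b}).Subsingleton :=
  hS.inter_subsingleton (bicoloring tr) (by rintro _ ⟨_, rfl⟩ _ ⟨_, rfl⟩; rfl)
    (by rintro _ ⟨_, rfl⟩ _ ⟨_, rfl⟩ w h₁ h₂; cases w <;> simp_all)

theorem inter_vz_subsingleton (hS : IsGraphSClub (MGraph3 tr) 3 S) :
    (S ∩ {w | ∃ c, w = vz c}).Subsingleton :=
  hS.inter_subsingleton (bicoloring tr) (by rintro _ ⟨_, rfl⟩ _ ⟨_, rfl⟩; rfl)
    (by rintro _ ⟨_, rfl⟩ _ ⟨_, rfl⟩ w h₁ h₂; cases w <;> simp_all)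

theorem inter_va_subsingleton (hS : IsGraphSClub (MGraph3 tr) 3 S) :
    (S ∩ {w | ∃ i, w = va i}).Subsingleton :=
  hS.inter_subsingleton (bicoloring tr) (by rintro _ ⟨_, rfl⟩ _ ⟨_, rfl⟩; rfl)
    (by rintro _ ⟨_, rfl⟩ _ ⟨_, rfl⟩ w h₁ h₂; cases w <;> simp_all)

theorem vc_diff_subsingleton (hS : IsGraphSClub (MGraph3 tr) 3 S)
    (htr : IsTwoBounded tr)
    {i₁ i₂ : Fin m} (hne : i₁ ≠ i₂) (h₁ : vc i₁ ∈ S) (h₂ : vc i₂ ∈ S) :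
    ((S ∩ {w | ∃ i, w = vc i}) \ {vc i₁, vc i₂}).Subsingleton := by
  rintro _ ⟨⟨hj, j, rfl⟩, hj₁₂⟩ _ ⟨⟨hj', j', rfl⟩, hj₁₂'⟩
  by_contra hjj
  obtain ⟨e, heS, he₁, he₂⟩ :=
    hS.exists_adj_adj_of_color_eq (bicoloring tr) h₁ h₂ (by simpa using hne) rfl
  obtain ⟨e', he'S, he'₁, he'₂⟩ :=
    hS.exists_adj_adj_of_color_eq (bicoloring tr) hj hj' hjj rfl
  have hnbr : ∀ {w}, (MGraph3 tr).Adj w e → w = vc i₁ ∨ w = vc i₂ :=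
    eq_or_eq_of_adj_vc htr hne he₁ he₂.symm
  have hee : e ≠ e' := by
    rintro rfl
    exact hj₁₂ (hnbr he'₁)
  obtain ⟨w, -, hew, hwe'⟩ := hS.exists_adj_adj_of_color_eq (bicoloring tr) heS he'S hee
    (bicoloring_eq_of_adj_vc he₁ he'₁)
  obtain rfl | rfl := eq_or_eq_of_adj_vc htr (mt (congrArg vc) hjj) he'₁ he'₂.symm hwe'
  · exact hj₁₂ (hnbr hew.symm)
  · exact hj₁₂' (hnbr hew.symm)

theorem ncard_inter_vc_le_three (hS : IsGraphSClub (MGraph3 tr) 3 S)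
    (htr : IsTwoBounded tr)
    {i₁ i₂ : Fin m} (hne : i₁ ≠ i₂) (h₁ : vc i₁ ∈ S) (h₂ : vc i₂ ∈ S) :
    (S ∩ {w | ∃ i, w = vc i}).ncard ≤ 3 := by
  have hsub : {vc i₁, vc i₂} ⊆ S ∩ {w | ∃ i, w = vc i} := by
    rintro _ (rfl | rfl)
    exacts [⟨h₁, i₁, rfl⟩, ⟨h₂, i₂, rfl⟩]
  rw [← Set.union_sdiff_cancel hsub]
  calc _ ≤ _ := Set.ncard_union_le _ _
    _ ≤ 2 + 1 := add_le_add (Set.ncard_pair (by simpa using hne)).le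
        (vc_diff_subsingleton hS htr hne h₁ h₂).ncard_le_one

theorem ncard_inter_elem_le_three (hS : IsGraphSClub (MGraph3 tr) 3 S) :
    (S ∩ {w | (∃ a, w = vx a) ∨ (∃ b, w = vy b) ∨ (∃ c, w = vz c)}).ncard ≤ 3 := by
  rw [Set.ofPred_or, Set.ofPred_or, Set.inter_union_distrib_left, Set.inter_union_distrib_left]
  exact (Set.ncard_union_le _ _).trans <| add_le_add (inter_vx_subsingleton hS).ncard_le_one <|
    (Set.ncard_union_le _ _).trans <| add_le_add (inter_vy_subsingleton hS).ncard_le_one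
      (inter_vz_subsingleton hS).ncard_le_one

theorem ncard_le_of_forall_vh_notMem (hh : ∀ i j, vh i j ∉ S) :
    S.ncard ≤ (S ∩ {w | ∃ i, w = vc i}).ncard +
      (S ∩ {w | (∃ a, w = vx a) ∨ (∃ b, w = vy b) ∨ (∃ c, w = vz c)}).ncard +
      (S ∩ {w | ∃ i, w = va i}).ncard := by
  have hcover : S = S ∩ {w | ∃ i, w = vc i} ∪
      S ∩ {w | (∃ a, w = vx a) ∨ (∃ b, w = vy b) ∨ (∃ c, w = vz c)} ∪
      S ∩ {w | ∃ i, w = va i} := by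
    ext w
    cases w <;> simp [hh]
  calc S.ncard ≤ _ := (congrArg Set.ncard hcover).le
    _ ≤ _ := Set.ncard_union_le _ _
    _ ≤ _ := add_le_add_left (Set.ncard_union_le _ _) _

end MGraph3

theorem threeClub_two_centers_general {X Y Z : Type} {m t : ℕ}
    (tr : Fin m → X × Y × Z)
    (hX : ∀ a : X, ({i : Fin m | (tr i).1 = a}).ncard ≤ 2)
    (hY : ∀ b : Y, ({i : Fin m | (tr i).2.1 = b}).ncard ≤ 2)
    (hZ : ∀ c : Z, ({i : Fin m | (tr i).2.2 = c}).ncard ≤ 2)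
    (S : Set (MVtx3 X Y Z m t)) (hS : IsGraphSClub (MGraph3 tr) 3 S)
    (i₁ i₂ : Fin m) (hne : i₁ ≠ i₂)
    (h₁ : MVtx3.vc i₁ ∈ S) (h₂ : MVtx3.vc i₂ ∈ S) :
    (∀ (i : Fin m) (j : Fin (t - 5)), MVtx3.vh i j ∉ S) ∧
    (S ∩ {w : MVtx3 X Y Z m t | ∃ i, w = MVtx3.vc i}).ncard ≤ 3 ∧
    (S ∩ {w : MVtx3 X Y Z m t |
        (∃ a, w = MVtx3.vx a) ∨ (∃ b, w = MVtx3.vy b) ∨ (∃ c, w = MVtx3.vz c)}).ncard ≤ 4 ∧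
    (S ∩ {w : MVtx3 X Y Z m t | ∃ i, w = MVtx3.va i}).ncard ≤ 1 ∧
    S.ncard ≤ 7 := by
  have hh : ∀ (i : Fin m) (j : Fin (t - 5)), vh i j ∉ S := fun i =>
    if hi : i = i₁ then MGraph3.vh_notMem_of_vc_mem hS (hi ▸ hne.symm) h₂
    else MGraph3.vh_notMem_of_vc_mem hS (Ne.symm hi) h₁
  have hc := MGraph3.ncard_inter_vc_le_three hS ⟨hX, hY, hZ⟩ hne h₁ h₂
  have he := MGraph3.ncard_inter_elem_le_three hS
  have ha := (MGraph3.inter_va_subsingleton hS).ncard_le_one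
  have := MGraph3.ncard_le_of_forall_vh_notMem hh
  exact ⟨hh, hc, by omega, ha, by omega⟩

/-- Every 3-club of `G_{M,t,3}` containing at least two triple vertices `c_i` contains
no pendant vertex `h_{i,j}`, at most 3 `c`-vertices, at most 4 vertices of
`X ∪ Y ∪ Z`, and at most one `a`-vertex; hence it has at most 7 vertices. -/
theorem threeClub_two_centers {X Y Z : Type} {m t : ℕ} (ht : 8 ≤ t)
    (tr : Fin m → X × Y × Z)
    (hX : ∀ a : X, ({i : Fin m | (tr i).1 = a}).ncard ≤ 2)
    (hY : ∀ b : Y, ({i : Fin m | (tr i).2.1 = b}).ncard ≤ 2)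
    (hZ : ∀ c : Z, ({i : Fin m | (tr i).2.2 = c}).ncard ≤ 2)
    (S : Set (MVtx3 X Y Z m t)) (hS : IsGraphSClub (MGraph3 tr) 3 S)
    (i₁ i₂ : Fin m) (hne : i₁ ≠ i₂)
    (h₁ : MVtx3.vc i₁ ∈ S) (h₂ : MVtx3.vc i₂ ∈ S) :
    (∀ (i : Fin m) (j : Fin (t - 5)), MVtx3.vh i j ∉ S) ∧
    (S ∩ {w : MVtx3 X Y Z m t | ∃ i, w = MVtx3.vc i}).ncard ≤ 3 ∧
    (S ∩ {w : MVtx3 X Y Z m t |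
        (∃ a, w = MVtx3.vx a) ∨ (∃ b, w = MVtx3.vy b) ∨ (∃ c, w = MVtx3.vz c)}).ncard ≤ 4 ∧
    (S ∩ {w : MVtx3 X Y Z m t | ∃ i, w = MVtx3.va i}).ncard ≤ 1 ∧
    S.ncard ≤ 7 :=
  threeClub_two_centers_general tr hX hY hZ S hS i₁ i₂ hne h₁ h₂
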